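/- arXiv:2410.06908 — 4 statements merged into one kernel-verified Lean document; each statement's English description precedes it below -/
import Mathlib

section
/- For every real α, every n ≥ 1, and every x ∈ (0,1), Σ_{k=0}^{n} (α − T_{n,k}(x)/n)²·P_{n,k}(x) = α² + 2 − 2/n. -/
/-!
Clearing denominators, `x(1-x) T_{n,k}(x) = k(k-1) - 2(n-1)xk + n(n-1)x²` is a quadratic in `k`.
Against the Bernstein weights the falling factorials have the moments
`∑ₖ k^(m) P_{n,k}(x) = n^(m) xᵐ`, so this quadratic has mean `0` and second moment
`2n(n-1)x²(1-x)²`. Hence `∑ T P = 0` and `∑ T² P = 2n(n-1)`, and expanding the square gives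
`α² + 2n(n-1)/n²`.
-/

/-- Bernstein basis polynomial `P_{n,k}(x) = C(n,k) x^k (1-x)^{n-k}`. -/
noncomputable def bern (n k : ℕ) (x : ℝ) : ℝ :=
  (n.choose k : ℝ) * x ^ k * (1 - x) ^ (n - k)

/-- `T_{n,k}(x) = k(k-1)(1-x)/x - 2k(n-k) + (n-k)(n-k-1)x/(1-x)`. -/
noncomputable def T (n k : ℕ) (x : ℝ) : ℝ :=
  (k : ℝ) * ((k : ℝ) - 1) * (1 - x) / x - 2 * (k : ℝ) * ((n : ℝ) - (k : ℝ))
    + ((n : ℝ) - (k : ℝ)) * ((n : ℝ) - (k : ℝ) - 1) * x / (1 - x)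

open Finset

theorem sum_bern (n : ℕ) (x : ℝ) : ∑ k ∈ range (n + 1), bern n k x = 1 := by
  simpa [bernsteinPolynomial, bern, Polynomial.eval_finsetSum] using
    congrArg (Polynomial.eval x) (bernsteinPolynomial.sum ℝ n)

theorem succ_mul_bern_succ (n k : ℕ) (x : ℝ) :
    ((k : ℝ) + 1) * bern (n + 1) (k + 1) x = ((n : ℝ) + 1) * x * bern n k x := by
  have h : ((n + 1).choose (k + 1) : ℝ) * (k + 1) = (n + 1) * n.choose k := by
    exact_mod_cast (Nat.add_one_mul_choose_eq n k).symm
  rw [bern, bern, Nat.add_sub_add_right, pow_succ]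
  linear_combination x ^ k * x * (1 - x) ^ (n - k) * h

theorem sum_descFactorial_mul_bern (n m : ℕ) (x : ℝ) :
    ∑ k ∈ range (n + 1), (k.descFactorial m : ℝ) * bern n k x = n.descFactorial m * x ^ m := by
  induction m generalizing n with
  | zero => simpa using sum_bern n x
  | succ m ih =>
    cases n with
    | zero => simp
    | succ n =>
      rw [sum_range_succ']
      simp only [Nat.succ_descFactorial_succ, Nat.zero_descFactorial_succ, Nat.cast_mul,
        Nat.cast_succ, Nat.cast_zero, zero_mul, add_zero]
      calc ∑ k ∈ range (n + 1), ((k : ℝ) + 1) * k.descFactorial m * bern (n + 1) (k + 1) x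
          = ((n : ℝ) + 1) * x * ∑ k ∈ range (n + 1), k.descFactorial m * bern n k x := by
            rw [mul_sum]
            exact sum_congr rfl fun k _ => by
              linear_combination (k.descFactorial m : ℝ) * succ_mul_bern_succ n k x
        _ = ((n : ℝ) + 1) * n.descFactorial m * x ^ (m + 1) := by rw [ih]; ring

theorem cast_descFactorial_eq_prod {R : Type*} [CommRing R] (k m : ℕ) :
    (k.descFactorial m : R) = ∏ i ∈ range m, ((k : R) - i) := by
  rw [← descPochhammer_eval_eq_descFactorial, descPochhammer_eval_eq_prod_range]

theorem mul_T_eq (n k : ℕ) {x : ℝ} (hx₀ : x ≠ 0) (hx₁ : x ≠ 1) :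
    x * (1 - x) * T n k x = k * (k - 1) - 2 * (n - 1) * x * k + n * (n - 1) * x ^ 2 := by
  have : 1 - x ≠ 0 := sub_ne_zero.mpr hx₁.symm
  unfold T
  field_simp
  ring

theorem sum_T_mul_bern (n : ℕ) {x : ℝ} (hx₀ : x ≠ 0) (hx₁ : x ≠ 1) :
    ∑ k ∈ range (n + 1), T n k x * bern n k x = 0 := by
  have key : x * (1 - x) * ∑ k ∈ range (n + 1), T n k x * bern n k x
      = ∑ k ∈ range (n + 1), (k.descFactorial 2 : ℝ) * bern n k x
        - 2 * (n - 1) * x * ∑ k ∈ range (n + 1), (k.descFactorial 1 : ℝ) * bern n k x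
        + n * (n - 1) * x ^ 2 * ∑ k ∈ range (n + 1), (k.descFactorial 0 : ℝ) * bern n k x := by
    simp only [mul_sum, ← sum_sub_distrib, ← sum_add_distrib]
    refine sum_congr rfl fun k _ => ?_
    simp only [← mul_assoc, mul_T_eq n k hx₀ hx₁, cast_descFactorial_eq_prod, prod_range_succ,
      prod_range_zero]
    ring
  simp only [sum_descFactorial_mul_bern] at key
  simp only [cast_descFactorial_eq_prod, prod_range_succ, prod_range_zero] at key
  have hx : x * (1 - x) ≠ 0 := mul_ne_zero hx₀ (sub_ne_zero.mpr hx₁.symm)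
  exact mul_left_cancel₀ hx (key.trans (by ring))

theorem sum_T_sq_mul_bern (n : ℕ) {x : ℝ} (hx₀ : x ≠ 0) (hx₁ : x ≠ 1) :
    ∑ k ∈ range (n + 1), T n k x ^ 2 * bern n k x = 2 * n * (n - 1) := by
  -- the square of the quadratic in `mul_T_eq`, expanded in the falling factorials of `k`
  have key : (x * (1 - x)) ^ 2 * ∑ k ∈ range (n + 1), T n k x ^ 2 * bern n k x
      = ∑ k ∈ range (n + 1), (k.descFactorial 4 : ℝ) * bern n k x
        + (4 - 4 * (n - 1) * x) * ∑ k ∈ range (n + 1), (k.descFactorial 3 : ℝ) * bern n k x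
        + (2 - 8 * (n - 1) * x + 4 * (n - 1) ^ 2 * x ^ 2 + 2 * n * (n - 1) * x ^ 2)
          * ∑ k ∈ range (n + 1), (k.descFactorial 2 : ℝ) * bern n k x
        + (4 * (n - 1) ^ 2 * x ^ 2 - 4 * n * (n - 1) ^ 2 * x ^ 3)
          * ∑ k ∈ range (n + 1), (k.descFactorial 1 : ℝ) * bern n k x
        + n ^ 2 * (n - 1) ^ 2 * x ^ 4
          * ∑ k ∈ range (n + 1), (k.descFactorial 0 : ℝ) * bern n k x := by
    simp only [mul_sum, ← sum_add_distrib]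
    refine sum_congr rfl fun k _ => ?_
    simp only [← mul_assoc, ← mul_pow, mul_T_eq n k hx₀ hx₁, cast_descFactorial_eq_prod,
      prod_range_succ, prod_range_zero]
    ring
  simp only [sum_descFactorial_mul_bern] at key
  simp only [cast_descFactorial_eq_prod, prod_range_succ, prod_range_zero] at key
  have hx : (x * (1 - x)) ^ 2 ≠ 0 :=
    pow_ne_zero 2 (mul_ne_zero hx₀ (sub_ne_zero.mpr hx₁.symm))
  exact mul_left_cancel₀ hx (key.trans (by ring))

theorem Phi_identity (α : ℝ) (n : ℕ) (hn : 1 ≤ n) (x : ℝ)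
    (hx : x ∈ Set.Ioo (0:ℝ) 1) :
    ∑ k ∈ Finset.range (n + 1), (α - T n k x / n) ^ 2 * bern n k x
      = α ^ 2 + 2 - 2 / n := by
  have hx₀ : x ≠ 0 := hx.1.ne'
  have hx₁ : x ≠ 1 := hx.2.ne
  have hn₀ : (n : ℝ) ≠ 0 := by exact_mod_cast Nat.one_le_iff_ne_zero.mp hn
  calc ∑ k ∈ range (n + 1), (α - T n k x / n) ^ 2 * bern n k x
      = α ^ 2 * ∑ k ∈ range (n + 1), bern n k x
        - 2 * α / n * ∑ k ∈ range (n + 1), T n k x * bern n k x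
        + 1 / n ^ 2 * ∑ k ∈ range (n + 1), T n k x ^ 2 * bern n k x := by
        simp only [mul_sum, ← sum_sub_distrib, ← sum_add_distrib]
        exact sum_congr rfl fun k _ => by ring
    _ = α ^ 2 + 2 - 2 / n := by
        rw [sum_bern, sum_T_mul_bern n hx₀ hx₁, sum_T_sq_mul_bern n hx₀ hx₁]
        field_simp
        ring
end

section
/- For every integer n ≥ 2, the sum θ(n) = Σ_{k=n}^{∞} 1/(k²(k+1)²) satisfies θ(n) ≤ 4/(9n³). -/
/-! The summand is dominated by the telescoping difference `1/(3x³) - 1/(3(x+1)³)` with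
`x = n + k`, which exceeds it by exactly `1/(3x³(x+1)³)`; hence `θ(n) ≤ 1/(3n³) ≤ 4/(9n³)`. -/

lemma one_div_sq_mul_add_one_sq_le {x : ℝ} (hx : 0 < x) :
    1 / (x ^ 2 * (x + 1) ^ 2) ≤ 1 / (3 * x ^ 3) - 1 / (3 * (x + 1) ^ 3) := by
  have hgap : 1 / (3 * x ^ 3) - 1 / (3 * (x + 1) ^ 3) - 1 / (x ^ 2 * (x + 1) ^ 2)
      = 1 / (3 * x ^ 3 * (x + 1) ^ 3) := by
    field_simp
    ring
  have : 0 ≤ 1 / (3 * x ^ 3 * (x + 1) ^ 3) := by positivity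
  linarith

lemma Real.tsum_le_of_le_sub_succ {f g : ℕ → ℝ} (hf : ∀ k, 0 ≤ f k) (hg : ∀ k, 0 ≤ g k)
    (hfg : ∀ k, f k ≤ g k - g (k + 1)) : ∑' k, f k ≤ g 0 :=
  Real.tsum_le_of_sum_range_le hf fun m =>
    calc ∑ k ∈ Finset.range m, f k ≤ ∑ k ∈ Finset.range m, (g k - g (k + 1)) :=
          Finset.sum_le_sum fun k _ => hfg k
      _ = g 0 - g m := Finset.sum_range_sub' g m
      _ ≤ g 0 := sub_le_self _ (hg m)

theorem theta_bound (n : ℕ) (hn : 2 ≤ n) :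
    ∑' k : ℕ, (1 : ℝ) / (((n : ℝ) + k) ^ 2 * ((n : ℝ) + k + 1) ^ 2)
      ≤ 4 / (9 * (n : ℝ) ^ 3) := by
  have hn0 : (0 : ℝ) < n := by exact_mod_cast (by omega : 0 < n)
  have hpos (k : ℕ) : (0 : ℝ) < n + k := by positivity
  calc ∑' k : ℕ, (1 : ℝ) / (((n : ℝ) + k) ^ 2 * ((n : ℝ) + k + 1) ^ 2)
      ≤ 1 / (3 * ((n : ℝ) + (0 : ℕ)) ^ 3) :=
        Real.tsum_le_of_le_sub_succ (g := fun k : ℕ => 1 / (3 * ((n : ℝ) + k) ^ 3))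
          (fun k => by positivity) (fun k => by positivity) fun k => by
            simpa [add_assoc] using one_div_sq_mul_add_one_sq_le (hpos k)
    _ ≤ 4 / (9 * (n : ℝ) ^ 3) := by
      rw [Nat.cast_zero, add_zero, div_le_div_iff₀ (by positivity) (by positivity)]
      linarith [pow_pos hn0 3]
end

section
/- For all n ≥ 1 and x ∈ (0,1), Σ_{k=0}^{n} T_{n,k}'(x)·P_{n,k}'(x) = −2n(n−1)/(x(1−x)), where T_{n,k}'(x) = −k(k−1)/x² + (n−k)(n−k−1)/(1−x)². -/
/-- Derivative of `T_{n,k}`: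
`T_{n,k}'(x) = -k(k-1)/x² + (n-k)(n-k-1)/(1-x)²`. -/
noncomputable def Tp (n k : ℕ) (x : ℝ) : ℝ :=
  -((k : ℝ) * ((k : ℝ) - 1)) / x ^ 2
    + ((n : ℝ) - (k : ℝ)) * ((n : ℝ) - (k : ℝ) - 1) / (1 - x) ^ 2

lemma bern_eval (n k : ℕ) (y : ℝ) : (bernsteinPolynomial ℝ n k).eval y = bern n k y := by
  simp [bernsteinPolynomial, bern]

lemma bern_diff (n k : ℕ) : Differentiable ℝ (fun y => bern n k y) := by
  unfold bern; fun_prop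

lemma cast_fix (m : ℕ) : ((m * (m-1) : ℕ):ℝ) = (m:ℝ)*((m:ℝ)-1) := by
  cases m with
  | zero => simp
  | succ p => push_cast [Nat.succ_sub_one]; ring

lemma e0 (n : ℕ) (y : ℝ) : ∑ k ∈ Finset.range (n+1), bern n k y = 1 := by
  have := congrArg (Polynomial.eval y) (bernsteinPolynomial.sum ℝ n)
  simpa [Polynomial.eval_finset_sum, bern_eval] using this

lemma e1 (n : ℕ) (y : ℝ) : ∑ k ∈ Finset.range (n+1), (k:ℝ) * bern n k y = n * y := by
  have := congrArg (Polynomial.eval y) (bernsteinPolynomial.sum_smul ℝ n)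
  simpa [Polynomial.eval_finset_sum, bern_eval] using this

lemma e2 (n : ℕ) (y : ℝ) :
    ∑ k ∈ Finset.range (n+1), (k:ℝ) * ((k:ℝ)-1) * bern n k y = n * ((n:ℝ)-1) * y^2 := by
  have := congrArg (Polynomial.eval y) (bernsteinPolynomial.sum_mul_smul ℝ n)
  simpa [Polynomial.eval_finset_sum, bern_eval, ← Nat.cast_mul, cast_fix] using this

theorem sum_Tp_deriv_bern (n : ℕ) (hn : 1 ≤ n) (x : ℝ)
    (hx : x ∈ Set.Ioo (0:ℝ) 1) :
    ∑ k ∈ Finset.range (n + 1), Tp n k x * deriv (fun y => bern n k y) x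
      = -(2 * n * ((n : ℝ) - 1)) / (x * (1 - x)) := by
  obtain ⟨hx0, hx1⟩ := hx
  have hxne : x ≠ 0 := ne_of_gt hx0
  have hx1ne : (1:ℝ) - x ≠ 0 := ne_of_gt (by linarith)
  have hd : ∀ k, HasDerivAt (fun y => bern n k y) (deriv (fun y => bern n k y) x) x :=
    fun k => ((bern_diff n k).differentiableAt).hasDerivAt
  set d : ℕ → ℝ := fun k => deriv (fun y => bern n k y) x with hdDef
  -- derivative moment sums
  have D0 : ∑ k ∈ Finset.range (n+1), d k = 0 := by
    have H : HasDerivAt (fun y => ∑ k ∈ Finset.range (n+1), bern n k y)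
        (∑ k ∈ Finset.range (n+1), d k) x := HasDerivAt.fun_sum fun k _ => hd k
    have heq : (fun y => ∑ k ∈ Finset.range (n+1), bern n k y) = fun _ => (1:ℝ) :=
      funext (e0 n)
    rw [heq] at H
    exact H.unique (hasDerivAt_const x 1)
  have D1 : ∑ k ∈ Finset.range (n+1), (k:ℝ) * d k = n := by
    have H : HasDerivAt (fun y => ∑ k ∈ Finset.range (n+1), (k:ℝ) * bern n k y)
        (∑ k ∈ Finset.range (n+1), (k:ℝ) * d k) x :=
      HasDerivAt.fun_sum fun k _ => (hd k).const_mul _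
    have heq : (fun y => ∑ k ∈ Finset.range (n+1), (k:ℝ) * bern n k y)
        = fun y => (n:ℝ) * y := funext (e1 n)
    rw [heq] at H
    have H2 : HasDerivAt (fun y => (n:ℝ) * y) ((n:ℝ) * 1) x :=
      (hasDerivAt_id x).const_mul _
    simpa using H.unique H2
  have D2 : ∑ k ∈ Finset.range (n+1), (k:ℝ) * ((k:ℝ)-1) * d k
      = (n:ℝ) * ((n:ℝ)-1) * (2*x) := by
    have H : HasDerivAt (fun y => ∑ k ∈ Finset.range (n+1), (k:ℝ) * ((k:ℝ)-1) * bern n k y)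
        (∑ k ∈ Finset.range (n+1), (k:ℝ) * ((k:ℝ)-1) * d k) x :=
      HasDerivAt.fun_sum fun k _ => (hd k).const_mul _
    have heq : (fun y => ∑ k ∈ Finset.range (n+1), (k:ℝ) * ((k:ℝ)-1) * bern n k y)
        = fun y => (n:ℝ) * ((n:ℝ)-1) * y^2 := funext (e2 n)
    rw [heq] at H
    have H2 : HasDerivAt (fun y : ℝ => (n:ℝ) * ((n:ℝ)-1) * y^2)
        ((n:ℝ) * ((n:ℝ)-1) * (2*x^(2-1))) x := (hasDerivAt_pow 2 x).const_mul _
    simpa using H.unique (by simpa using H2)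
  -- Tp is quadratic in k
  set A : ℝ := -1/x^2 + 1/(1-x)^2
  set B : ℝ := -(2*(n:ℝ)-2)/(1-x)^2
  set C : ℝ := (n:ℝ)*((n:ℝ)-1)/(1-x)^2
  have hTp : ∀ k : ℕ, Tp n k x = A * ((k:ℝ)*((k:ℝ)-1)) + B * (k:ℝ) + C := by
    intro k
    unfold Tp
    simp only [A, B, C]
    field_simp
    ring
  calc ∑ k ∈ Finset.range (n + 1), Tp n k x * d k
      = ∑ k ∈ Finset.range (n + 1),
          (A * ((k:ℝ)*((k:ℝ)-1) * d k) + B * ((k:ℝ) * d k) + C * d k) := by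
        refine Finset.sum_congr rfl fun k _ => ?_
        rw [hTp k]; ring
    _ = A * (∑ k ∈ Finset.range (n+1), (k:ℝ)*((k:ℝ)-1) * d k)
        + B * (∑ k ∈ Finset.range (n+1), (k:ℝ) * d k)
        + C * (∑ k ∈ Finset.range (n+1), d k) := by
        rw [Finset.mul_sum, Finset.mul_sum, Finset.mul_sum, ← Finset.sum_add_distrib,
          ← Finset.sum_add_distrib]
    _ = -(2 * n * ((n : ℝ) - 1)) / (x * (1 - x)) := by
        rw [D0, D1, D2]
        simp only [A, B, C]
        field_simp
        ring
end

section
/- For all n ≥ 2 and x ∈ (0,1), Σ_{k=0}^{n} |T_{n,k}(x)·(1 − T_{n,k}(x)/n)|·P_{n,k}(x) ≤ √6·n. -/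
lemma castDesc (j k : ℕ) :
    ((k.descFactorial j : ℕ) : ℝ) = ∏ i ∈ Finset.range j, ((k : ℝ) - i) := by
  induction j with
  | zero => simp
  | succ j ih =>
    rw [Finset.prod_range_succ, ← ih, Nat.descFactorial_succ]
    rcases le_or_gt j k with h | h
    · push_cast [h]; ring
    · rw [Nat.descFactorial_eq_zero_iff_lt.2 h]; simp

lemma desc_choose {n j m : ℕ} (h : j + m ≤ n) :
    (j + m).descFactorial j * n.choose (j + m) = n.descFactorial j * (n - j).choose m := by
  have h1 := Nat.choose_mul (n := n) (k := j + m) (s := j) (Nat.le_add_right j m)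
  rw [Nat.descFactorial_eq_factorial_mul_choose, Nat.descFactorial_eq_factorial_mul_choose]
  simp only [Nat.add_sub_cancel_left] at h1
  calc Nat.factorial j * (j + m).choose j * n.choose (j + m)
      = Nat.factorial j * (n.choose (j + m) * (j + m).choose j) := by ring
    _ = Nat.factorial j * (n.choose j * (n - j).choose m) := by rw [h1]
    _ = Nat.factorial j * n.choose j * (n - j).choose m := by ring

lemma sum_desc_bern (n j : ℕ) (x : ℝ) :
    ∑ k ∈ Finset.range (n + 1), (k.descFactorial j : ℝ) * bern n k x
      = (n.descFactorial j : ℝ) * x ^ j := by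
  rcases lt_or_ge n j with h | h
  · rw [Nat.descFactorial_eq_zero_iff_lt.2 h]
    rw [Finset.sum_eq_zero]
    · simp
    · intro k hk
      rw [Finset.mem_range] at hk
      have : k < j := by omega
      rw [Nat.descFactorial_eq_zero_iff_lt.2 this]
      simp
  · have hsub : Finset.Ico j (n + 1) ⊆ Finset.range (n + 1) := by
      intro k hk; rw [Finset.mem_range]; exact (Finset.mem_Ico.1 hk).2
    rw [← Finset.sum_subset hsub ?_]
    · rw [Finset.sum_Ico_eq_sum_range]
      have hlen : n + 1 - j = (n - j) + 1 := by omega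
      rw [hlen]
      have hterm : ∀ i ∈ Finset.range ((n - j) + 1),
          ((j + i).descFactorial j : ℝ) * bern n (j + i) x
          = ((n.descFactorial j : ℝ) * x ^ j) *
            (((n - j).choose i : ℝ) * x ^ i * (1 - x) ^ ((n - j) - i)) := by
        intro i hi
        rw [Finset.mem_range] at hi
        have hle : j + i ≤ n := by omega
        unfold bern
        have hc : ((j + i).descFactorial j : ℝ) * (n.choose (j + i) : ℝ)
            = (n.descFactorial j : ℝ) * ((n - j).choose i : ℝ) := by
          rw [← Nat.cast_mul, ← Nat.cast_mul, desc_choose hle]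
        have hexp : n - (j + i) = (n - j) - i := by omega
        rw [hexp, pow_add]
        calc ((j + i).descFactorial j : ℝ) * ((n.choose (j + i) : ℝ) * (x ^ j * x ^ i) * (1 - x) ^ ((n - j) - i))
            = (((j + i).descFactorial j : ℝ) * (n.choose (j + i) : ℝ)) * (x ^ j * x ^ i) * (1 - x) ^ ((n - j) - i) := by ring
          _ = ((n.descFactorial j : ℝ) * ((n - j).choose i : ℝ)) * (x ^ j * x ^ i) * (1 - x) ^ ((n - j) - i) := by rw [hc]
          _ = ((n.descFactorial j : ℝ) * x ^ j) * (((n - j).choose i : ℝ) * x ^ i * (1 - x) ^ ((n - j) - i)) := by ring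
      rw [Finset.sum_congr rfl hterm, ← Finset.mul_sum]
      have hbin : ∑ i ∈ Finset.range ((n - j) + 1),
          ((n - j).choose i : ℝ) * x ^ i * (1 - x) ^ ((n - j) - i) = 1 := by
        have := add_pow x (1 - x) (n - j)
        simp only [add_sub_cancel, one_pow] at this
        rw [Finset.sum_congr rfl (fun i _ => by ring :
          ∀ i ∈ Finset.range ((n - j) + 1),
            ((n - j).choose i : ℝ) * x ^ i * (1 - x) ^ ((n - j) - i)
            = x ^ i * (1 - x) ^ ((n - j) - i) * ((n - j).choose i : ℝ)), ← this]
      rw [hbin, mul_one]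
    · intro k hk hk'
      rw [Finset.mem_range] at hk
      rw [Finset.mem_Ico] at hk'
      have : k < j := by omega
      rw [Nat.descFactorial_eq_zero_iff_lt.2 this]
      simp

lemma bern_M0 (n : ℕ) (x : ℝ) : ∑ k ∈ Finset.range (n + 1), bern n k x = 1 := by
  have h := sum_desc_bern n 0 x
  simpa using h

lemma bern_D1 (n : ℕ) (x : ℝ) :
    ∑ k ∈ Finset.range (n + 1), (k : ℝ) * bern n k x = (n : ℝ) * x := by
  have h := sum_desc_bern n 1 x
  simp only [castDesc, Finset.prod_range_succ, Finset.prod_range_zero, Nat.cast_zero,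
    one_mul, sub_zero] at h
  rw [pow_one] at h
  exact h

lemma bern_D2 (n : ℕ) (x : ℝ) :
    ∑ k ∈ Finset.range (n + 1), ((k : ℝ) * ((k : ℝ) - 1)) * bern n k x
      = (n : ℝ) * ((n : ℝ) - 1) * x ^ 2 := by
  have h := sum_desc_bern n 2 x
  simp only [castDesc, Finset.prod_range_succ, Finset.prod_range_zero, Nat.cast_zero,
    Nat.cast_one, one_mul, sub_zero] at h
  rw [← h]

lemma bern_D3 (n : ℕ) (x : ℝ) :
    ∑ k ∈ Finset.range (n + 1), ((k : ℝ) * ((k : ℝ) - 1) * ((k : ℝ) - 2)) * bern n k x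
      = (n : ℝ) * ((n : ℝ) - 1) * ((n : ℝ) - 2) * x ^ 3 := by
  have h := sum_desc_bern n 3 x
  simp only [castDesc, Finset.prod_range_succ, Finset.prod_range_zero, Nat.cast_zero,
    Nat.cast_one, Nat.cast_ofNat, one_mul, sub_zero] at h
  rw [← h]

lemma bern_D4 (n : ℕ) (x : ℝ) :
    ∑ k ∈ Finset.range (n + 1),
        ((k : ℝ) * ((k : ℝ) - 1) * ((k : ℝ) - 2) * ((k : ℝ) - 3)) * bern n k x
      = (n : ℝ) * ((n : ℝ) - 1) * ((n : ℝ) - 2) * ((n : ℝ) - 3) * x ^ 4 := by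
  have h := sum_desc_bern n 4 x
  simp only [castDesc, Finset.prod_range_succ, Finset.prod_range_zero, Nat.cast_zero,
    Nat.cast_one, Nat.cast_ofNat, one_mul, sub_zero] at h
  rw [← h]

lemma sum_TB (n : ℕ) (x : ℝ) (hx0 : 0 < x) (hx1 : x < 1) :
    ∑ k ∈ Finset.range (n + 1), T n k x * bern n k x = 0 := by
  have hxne : x ≠ 0 := ne_of_gt hx0
  have hyne : (1 : ℝ) - x ≠ 0 := by intro h; nlinarith
  have hpt : ∀ k ∈ Finset.range (n + 1), T n k x * bern n k x =
      (1 / (x * (1 - x))) * (((k : ℝ) * ((k : ℝ) - 1)) * bern n k x)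
      + ((2 * x - 2 * (n : ℝ) * x) / (x * (1 - x))) * ((k : ℝ) * bern n k x)
      + (((n : ℝ) * ((n : ℝ) - 1) * x ^ 2) / (x * (1 - x))) * bern n k x := by
    intro k _
    have hT : T n k x = ((k : ℝ) * ((k : ℝ) - 1) + (2 * x - 2 * (n : ℝ) * x) * (k : ℝ)
        + (n : ℝ) * ((n : ℝ) - 1) * x ^ 2) / (x * (1 - x)) := by
      unfold T; field_simp; ring
    rw [hT]; field_simp
  rw [Finset.sum_congr rfl hpt, Finset.sum_add_distrib, Finset.sum_add_distrib,
    ← Finset.mul_sum, ← Finset.mul_sum, ← Finset.mul_sum, bern_D2, bern_D1, bern_M0]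
  field_simp
  ring

lemma sum_T2B (n : ℕ) (x : ℝ) (hx0 : 0 < x) (hx1 : x < 1) :
    ∑ k ∈ Finset.range (n + 1), T n k x ^ 2 * bern n k x
      = 2 * (n : ℝ) * ((n : ℝ) - 1) := by
  have hxne : x ≠ 0 := ne_of_gt hx0
  have hyne : (1 : ℝ) - x ≠ 0 := by intro h; nlinarith
  set c1 : ℝ := 2 * x - 1 - 2 * (n : ℝ) * x with hc1
  set c0 : ℝ := (n : ℝ) * ((n : ℝ) - 1) * x ^ 2 with hc0
  set pq2 : ℝ := (x * (1 - x)) ^ 2 with hpq2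
  have hpqne : pq2 ≠ 0 := by positivity
  have hpt : ∀ k ∈ Finset.range (n + 1), T n k x ^ 2 * bern n k x =
      (1 / pq2) * (((k : ℝ) * ((k : ℝ) - 1) * ((k : ℝ) - 2) * ((k : ℝ) - 3)) * bern n k x)
      + ((6 + 2 * c1) / pq2) * (((k : ℝ) * ((k : ℝ) - 1) * ((k : ℝ) - 2)) * bern n k x)
      + ((7 + 6 * c1 + c1 ^ 2 + 2 * c0) / pq2) * (((k : ℝ) * ((k : ℝ) - 1)) * bern n k x)
      + ((1 + 2 * c1 + c1 ^ 2 + 2 * c0 + 2 * c1 * c0) / pq2) * ((k : ℝ) * bern n k x)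
      + (c0 ^ 2 / pq2) * bern n k x := by
    intro k _
    have hT : T n k x = ((k : ℝ) ^ 2 + c1 * (k : ℝ) + c0) / (x * (1 - x)) := by
      unfold T; rw [hc1, hc0]; field_simp; ring
    rw [hT, div_pow, ← hpq2, div_mul_eq_mul_div]
    field_simp
    ring
  rw [Finset.sum_congr rfl hpt]
  rw [Finset.sum_add_distrib, Finset.sum_add_distrib, Finset.sum_add_distrib,
    Finset.sum_add_distrib, ← Finset.mul_sum, ← Finset.mul_sum, ← Finset.mul_sum,
    ← Finset.mul_sum, ← Finset.mul_sum, bern_D4, bern_D3, bern_D2, bern_D1, bern_M0]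
  rw [hc1, hc0, hpq2]
  field_simp
  ring

theorem sum_T_one_sub_T_bound (n : ℕ) (hn : 2 ≤ n) (x : ℝ)
    (hx : x ∈ Set.Ioo (0:ℝ) 1) :
    ∑ k ∈ Finset.range (n + 1), |T n k x * (1 - T n k x / n)| * bern n k x
      ≤ Real.sqrt 6 * n := by
  obtain ⟨hx0, hx1⟩ := hx
  have hnR : (0 : ℝ) < (n : ℝ) := by
    have : 0 < n := lt_of_lt_of_le (by norm_num) hn
    exact_mod_cast this
  have hn2 : (2:ℝ) ≤ (n : ℝ) := by exact_mod_cast hn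
  have hBnn : ∀ k, 0 ≤ bern n k x := by
    intro k
    unfold bern
    have h1 : (0:ℝ) ≤ 1 - x := by linarith
    positivity
  set f : ℕ → ℝ := fun k => |T n k x| * Real.sqrt (bern n k x) with hf
  set g : ℕ → ℝ := fun k => |1 - T n k x / n| * Real.sqrt (bern n k x) with hg
  have hfg : ∀ k ∈ Finset.range (n + 1),
      |T n k x * (1 - T n k x / n)| * bern n k x = f k * g k := by
    intro k _
    rw [hf, hg]
    simp only []
    rw [abs_mul]
    calc |T n k x| * |1 - T n k x / ↑n| * bern n k x
        = |T n k x| * |1 - T n k x / ↑n|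
            * (Real.sqrt (bern n k x) * Real.sqrt (bern n k x)) := by
          rw [Real.mul_self_sqrt (hBnn k)]
      _ = |T n k x| * Real.sqrt (bern n k x)
            * (|1 - T n k x / ↑n| * Real.sqrt (bern n k x)) := by ring
  have hf2 : ∑ k ∈ Finset.range (n + 1), f k ^ 2 = 2 * (n : ℝ) * ((n : ℝ) - 1) := by
    rw [← sum_T2B n x hx0 hx1]
    refine Finset.sum_congr rfl fun k _ => ?_
    rw [hf]
    simp only []
    rw [mul_pow, sq_abs, Real.sq_sqrt (hBnn k)]
  have hg2 : ∑ k ∈ Finset.range (n + 1), g k ^ 2 ≤ 3 := by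
    have hpt : ∀ k ∈ Finset.range (n + 1), g k ^ 2 =
        bern n k x - (2 / (n : ℝ)) * (T n k x * bern n k x)
          + (1 / (n : ℝ) ^ 2) * (T n k x ^ 2 * bern n k x) := by
      intro k _
      rw [hg]
      simp only []
      rw [mul_pow, sq_abs, Real.sq_sqrt (hBnn k)]
      field_simp
      ring
    rw [Finset.sum_congr rfl hpt, Finset.sum_add_distrib, Finset.sum_sub_distrib,
      ← Finset.mul_sum, ← Finset.mul_sum, bern_M0, sum_TB n x hx0 hx1,
      sum_T2B n x hx0 hx1]
    rw [mul_zero, sub_zero]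
    have h2 : (1 / (n : ℝ) ^ 2) * (2 * (n : ℝ) * ((n : ℝ) - 1)) ≤ 2 := by
      rw [div_mul_eq_mul_div, one_mul, div_le_iff₀ (by positivity)]
      nlinarith
    linarith
  have hcs := Finset.sum_mul_sq_le_sq_mul_sq (Finset.range (n + 1)) f g
  have hSnn : 0 ≤ ∑ k ∈ Finset.range (n + 1),
      |T n k x * (1 - T n k x / n)| * bern n k x :=
    Finset.sum_nonneg fun k _ => mul_nonneg (abs_nonneg _) (hBnn k)
  rw [Finset.sum_congr rfl hfg]
  have hfg2 : (∑ k ∈ Finset.range (n + 1), f k * g k) ^ 2 ≤ 6 * (n : ℝ) ^ 2 := by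
    calc (∑ k ∈ Finset.range (n + 1), f k * g k) ^ 2
        ≤ (∑ k ∈ Finset.range (n + 1), f k ^ 2) * ∑ k ∈ Finset.range (n + 1), g k ^ 2 := hcs
      _ ≤ (2 * (n : ℝ) * ((n : ℝ) - 1)) * 3 := by
          rw [hf2]
          apply mul_le_mul_of_nonneg_left hg2
          nlinarith
      _ ≤ 6 * (n : ℝ) ^ 2 := by nlinarith
  have hSnn' : 0 ≤ ∑ k ∈ Finset.range (n + 1), f k * g k := by
    rw [← Finset.sum_congr rfl hfg]; exact hSnn
  calc ∑ k ∈ Finset.range (n + 1), f k * g k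
      = Real.sqrt ((∑ k ∈ Finset.range (n + 1), f k * g k) ^ 2) := by
        rw [Real.sqrt_sq hSnn']
    _ ≤ Real.sqrt (6 * (n : ℝ) ^ 2) := Real.sqrt_le_sqrt hfg2
    _ = Real.sqrt 6 * n := by
        rw [Real.sqrt_mul (by norm_num), Real.sqrt_sq (le_of_lt hnR)]
end
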